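/- arXiv:2001.07096 — 2 statements merged into one kernel-verified Lean document; each statement's English description precedes it below -/
import Mathlib

section
/- Let K be a commutative domain and Λ = K[c₁, c₂]. A matrix of the form A = [[1 + a·c₂, -a·c₁], [b·c₂, 1 - b·c₁]] with a, b ∈ Λ has determinant 1 if and only if there exists d ∈ Λ with a = d·c₁ and b = d·c₂. -/
/-!
The determinant is `1 + a c₂ - b c₁`, so it equals `1` exactly when `a c₂ = b c₁`. As `c₁` is
prime in `Λ` and does not divide `c₂`, it divides `a`, and cancelling `c₁` gives the common
factor `d`.
-/

open MvPolynomial Matrix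

theorem Prime.mul_eq_mul_iff_exists_eq_mul {M : Type*} [CommMonoidWithZero M] [IsCancelMulZero M]
    {x y a b : M} (hx : Prime x) (hxy : ¬x ∣ y) :
    a * y = b * x ↔ ∃ d, a = d * x ∧ b = d * y := by
  constructor
  · intro h
    obtain ⟨d, rfl⟩ : x ∣ a := (hx.dvd_or_dvd ⟨b, by rw [h, mul_comm]⟩).resolve_right hxy
    refine ⟨d, mul_comm x d, mul_right_cancel₀ hx.ne_zero ?_⟩
    rw [← h]
    ac_rfl
  · rintro ⟨d, rfl, rfl⟩
    exact mul_right_comm d x y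

theorem Matrix.det_one_add_mul_eq_one_iff {R : Type*} [CommRing R] (a b x y : R) :
    !![1 + a * y, -(a * x); b * y, 1 - b * x].det = 1 ↔ a * y = b * x := by
  have hdet : !![1 + a * y, -(a * x); b * y, 1 - b * x].det = 1 + (a * y - b * x) := by
    rw [det_fin_two_of]
    ring
  rw [hdet, add_eq_left, sub_eq_zero]

theorem stmt2 (K : Type*) [CommRing K] [IsDomain K]
    (a b : MvPolynomial (Fin 2) K) :
    (!![1 + a * X 1, -(a * X 0); b * X 1, 1 - b * X 0] :
        Matrix (Fin 2) (Fin 2) (MvPolynomial (Fin 2) K)).det = 1 ↔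
      ∃ d : MvPolynomial (Fin 2) K, a = d * X 0 ∧ b = d * X 1 := by
  rw [det_one_add_mul_eq_one_iff]
  exact (X_prime (i := 0)).mul_eq_mul_iff_exists_eq_mul (by simp)
end

section
/- Let K be a commutative domain and Λ = K[c₁, c₂]. The stabilizer of the column (c₁, c₂)ᵀ in GL(2, Λ) equals exactly the set of matrices [[1 + a·c₁·c₂, -a·c₁²], [a·c₂², 1 - a·c₁·c₂]] for a ∈ Λ. -/
/-!
Write `x = c₁`, `y = c₂`. Both rows of `A (x, y)ᵀ = (x, y)ᵀ` are syzygies of `(x, y)`, and since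
`x` is prime and does not divide `y`, every syzygy `x u = y v` is a multiple of the Koszul one:
`(u, v) = w (y, x)`. This puts `A` in the form `[[1 + y b, -x b], [y d, 1 - x d]]`, whose
determinant `1 + y b - x d` has constant term `1`. A unit of `K[c₁, c₂]` is a constant, so the
determinant is `1`; then `x d = y b` is a syzygy again, so `b = a x` and `d = a y`.
-/

open MvPolynomial Matrix

section Stabilizer

variable {R : Type*} [CommRing R] {x y : R}

theorem det_stabilizer_form (b d : R) :
    (!![1 + y * b, -(x * b); y * d, 1 - x * d]).det = 1 + (y * b - x * d) := by
  rw [det_fin_two_of]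
  ring

variable [IsDomain R]

theorem exists_eq_mul_of_mul_eq_mul (hx : Prime x) (hxy : ¬x ∣ y) {u v : R}
    (h : x * u = y * v) : ∃ w, u = y * w ∧ v = x * w := by
  obtain ⟨w, rfl⟩ := (hx.dvd_mul.mp ⟨u, h.symm⟩).resolve_left hxy
  refine ⟨w, mul_left_cancel₀ hx.ne_zero ?_, rfl⟩
  rw [h]
  ring

theorem mulVec_eq_self_iff (hx : Prime x) (hxy : ¬x ∣ y) (A : Matrix (Fin 2) (Fin 2) R) :
    A *ᵥ ![x, y] = ![x, y] ↔
      ∃ b d : R, A = !![1 + y * b, -(x * b); y * d, 1 - x * d] := by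
  constructor
  · intro hA
    simp only [mulVec_fin_two, cons_val_zero, cons_val_one, cons_val_fin_one, vecCons_inj,
      and_true] at hA
    obtain ⟨h₀, h₁⟩ := hA
    obtain ⟨b, hb, hq⟩ := exists_eq_mul_of_mul_eq_mul hx hxy
      (u := A 0 0 - 1) (v := -A 0 1) (by linear_combination h₀)
    obtain ⟨d, hd, hr⟩ := exists_eq_mul_of_mul_eq_mul hx hxy
      (u := A 1 0) (v := 1 - A 1 1) (by linear_combination h₁)
    refine ⟨b, d, ?_⟩
    rw [A.eta_fin_two]
    simp only [EmbeddingLike.apply_eq_iff_eq, vecCons_inj, and_true]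
    exact ⟨⟨by linear_combination hb, by linear_combination -hq⟩, hd, by linear_combination -hr⟩
  · rintro ⟨b, d, rfl⟩
    rw [mulVec_fin_two]
    simp only [of_apply, cons_val_zero, cons_val_one, cons_val_fin_one]
    exact vec2_eq (by ring) (by ring)

theorem mulVec_eq_self_and_det_eq_one_iff (hx : Prime x) (hxy : ¬x ∣ y)
    (A : Matrix (Fin 2) (Fin 2) R) :
    (A *ᵥ ![x, y] = ![x, y] ∧ A.det = 1) ↔
      ∃ a : R, A = !![1 + a * x * y, -(a * x ^ 2); a * y ^ 2, 1 - a * x * y] := by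
  rw [mulVec_eq_self_iff hx hxy]
  constructor
  · rintro ⟨⟨b, d, rfl⟩, hdet⟩
    rw [det_stabilizer_form, add_eq_left, sub_eq_zero] at hdet
    obtain ⟨a, rfl, rfl⟩ := exists_eq_mul_of_mul_eq_mul hx hxy hdet.symm
    refine ⟨a, congrArg of (vec2_eq (vec2_eq ?_ ?_) (vec2_eq ?_ ?_))⟩ <;> ring
  · rintro ⟨a, rfl⟩
    constructor
    · exact ⟨a * x, a * y,
        congrArg of (vec2_eq (vec2_eq (by ring) (by ring)) (vec2_eq (by ring) (by ring)))⟩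
    · rw [det_fin_two_of]
      ring

end Stabilizer

theorem MvPolynomial.eq_one_of_isUnit_of_constantCoeff_eq_one {σ K : Type*} [CommRing K]
    [IsReduced K] {f : MvPolynomial σ K} (hf : IsUnit f) (h : constantCoeff f = 1) : f = 1 := by
  obtain ⟨r, -, rfl⟩ := isUnit_iff_eq_C_of_isReduced.mp hf
  rw [constantCoeff_C] at h
  rw [h, C_1]

theorem stmt3 (K : Type*) [CommRing K] [IsDomain K]
    (A : Matrix (Fin 2) (Fin 2) (MvPolynomial (Fin 2) K)) :
    (IsUnit A ∧ A.mulVec ![X 0, X 1] = ![X 0, X 1]) ↔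
      ∃ a : MvPolynomial (Fin 2) K,
        A = !![1 + a * X 0 * X 1, -(a * X 0 ^ 2);
               a * X 1 ^ 2, 1 - a * X 0 * X 1] := by
  have hx : Prime (X 0 : MvPolynomial (Fin 2) K) := X_prime
  have hxy : ¬(X 0 : MvPolynomial (Fin 2) K) ∣ X 1 := by simp
  rw [← mulVec_eq_self_and_det_eq_one_iff hx hxy, and_comm, isUnit_iff_isUnit_det]
  refine and_congr_right fun hA => ⟨fun hdet => ?_, fun hdet => hdet ▸ isUnit_one⟩
  obtain ⟨b, d, rfl⟩ := (mulVec_eq_self_iff hx hxy A).mp hA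
  refine eq_one_of_isUnit_of_constantCoeff_eq_one hdet ?_
  rw [det_stabilizer_form]
  simp
end
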